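/- Let 1/2 < p < 1 and q = 1 − p, and let X̄ = MC(δ_0, P_X) be the biased simple random walk on ℤ started at 0, where P_X(x, x+1) = p and P_X(x, x−1) = q for all x ∈ ℤ. Then the absolute-value process (|X̄_t|)_{t≥0} is a time-homogeneous Markov chain on ℕ equal in law to MC(δ_0, P_Z), where P_Z(0,1) = 1 and, for z ≥ 1, P_Z(z, z+1) = (p^{z+1} + q^{z+1})/(p^z + q^z) and P_Z(z, z−1) = (p^z q + q^z p)/(p^z + q^z), all other entries being 0. Moreover X̄ lumps exactly under the absolute value map to MC(δ_0, P_Z) with respect to the family (ν_n)_{n≥0} given by ν_n(k) = (p^n·1{k = n} + q^n·1{k = −n})/(p^n + q^n). -/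

import Mathlib

open MeasureTheory Filter Topology
open scoped ENNReal Classical

/-- A probability vector on a countable state space. -/
def IsProbVec {U : Type*} (v : U → ℝ≥0∞) : Prop := ∑' u, v u = 1

/-- A row-stochastic matrix on a countable state space. -/
def IsStochastic {U : Type*} (P : U → U → ℝ≥0∞) : Prop := ∀ u, ∑' w, P u w = 1

/-- `μ` is the law of the time-homogeneous Markov chain `MC(v,P)`. -/
def IsMarkovChain {U : Type*} [MeasurableSpace U]
    (v : U → ℝ≥0∞) (P : U → U → ℝ≥0∞) (μ : Measure (ℕ → U)) : Prop :=
  IsProbabilityMeasure μ ∧ IsProbVec v ∧ IsStochastic P ∧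
    ∀ (k : ℕ) (a : ℕ → U),
      μ {ω | ∀ i ≤ k, ω i = a i} = v (a 0) * ∏ i ∈ Finset.range k, P (a i) (a (i + 1))

/-- The transition matrix of the biased simple random walk on `ℤ`. -/
noncomputable def PXrw (p q : ℝ≥0∞) : ℤ → ℤ → ℝ≥0∞ :=
  fun x y => if y = x + 1 then p else if y = x - 1 then q else 0

/-- The transition matrix of the absolute-value chain on `ℕ`. -/
noncomputable def PZrw (p q : ℝ≥0∞) : ℕ → ℕ → ℝ≥0∞ :=
  fun z w =>
    if z = 0 then (if w = 1 then 1 else 0)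
    else if w = z + 1 then (p ^ (z + 1) + q ^ (z + 1)) / (p ^ z + q ^ z)
    else if w = z - 1 then (p ^ z * q + q ^ z * p) / (p ^ z + q ^ z)
    else 0

/-- The family `ν_n` on `ℤ`: `ν_n(k) = (p^n 1{k = n} + q^n 1{k = -n}) / (p^n + q^n)`. -/
noncomputable def nufam (p q : ℝ≥0∞) (n : ℕ) (k : ℤ) : ℝ≥0∞ :=
  (p ^ n * (if k = (n : ℤ) then 1 else 0) + q ^ n * (if k = -(n : ℤ) then 1 else 0))
    / (p ^ n + q ^ n)

/-!
Under `MC(δ₀, P_X)`, the paths with `|X̄_i| = a_i` for `i < t` and `X̄_t = y`, where `|y| = a_t`,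
have total weight `δ₀(a₀) ∏_{i<t} P_Z(a_i, a_{i+1}) ν_{a_t}(y)`. This is an induction on `t`
whose step is the exact lumping equation
`∑_{|x| = z} ν_z(x) P_X(x, x') = P_Z(z, |x'|) ν_{|x'|}(x')`.
Summing over `y` in the fibre gives the cylinder probabilities of `MC(δ₀, P_Z)`. The lumping
equation is a direct computation for `x' ≥ 0`, and the reflection `x ↦ -x`, which swaps `p` and
`q`, gives `x' < 0`.
-/

section MarkovChain

variable {U : Type*}

noncomputable def forwardWeight (v : U → ℝ≥0∞) (P : U → U → ℝ≥0∞) (S : ℕ → Finset U) :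
    ℕ → U → ℝ≥0∞
  | 0 => v
  | k + 1 => fun x => ∑ y ∈ S k, forwardWeight v P S k y * P y x

variable [MeasurableSpace U] [MeasurableSingletonClass U] {v : U → ℝ≥0∞} {P : U → U → ℝ≥0∞}
  {μ : Measure (ℕ → U)}

/- The tail `b` makes the induction on `k` go through: `IsMarkovChain` only describes the
measures of cylinders `{ω | ∀ i ≤ k, ω i = a i}`. -/
theorem IsMarkovChain.measure_pathIn_and_tail_eq (hμ : IsMarkovChain v P μ) (S : ℕ → Finset U)
    (k m : ℕ) (b : ℕ → U) :
    μ {ω | (∀ i < k, ω i ∈ S i) ∧ ∀ j ≤ m, ω (k + j) = b j}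
      = forwardWeight v P S k (b 0) * ∏ j ∈ Finset.range m, P (b j) (b (j + 1)) := by
  induction k generalizing m b with
  | zero => simpa [forwardWeight] using hμ.2.2.2 m b
  | succ k ih =>
    let cons : U → ℕ → U := fun y j => Nat.casesOn j y b
    have hsplit : {ω : ℕ → U | (∀ i < k + 1, ω i ∈ S i) ∧ ∀ j ≤ m, ω (k + 1 + j) = b j}
        = ⋃ y ∈ S k, {ω | (∀ i < k, ω i ∈ S i) ∧ ∀ j ≤ m + 1, ω (k + j) = cons y j} := by
      ext ω
      simp only [Set.mem_ofPred_eq, Set.mem_iUnion, exists_prop]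
      constructor
      · rintro ⟨hS, hb⟩
        refine ⟨ω k, hS k k.lt_succ_self, fun i hi => hS i (by omega), ?_⟩
        rintro (_ | j) hj
        · rfl
        · simpa [cons, ← add_assoc, add_right_comm] using hb j (by omega)
      · rintro ⟨y, hy, hS, hb⟩
        refine ⟨fun i hi => ?_, fun j hj => ?_⟩
        · rcases Nat.lt_succ_iff_lt_or_eq.1 hi with hi | rfl
          · exact hS i hi
          · simpa [cons] using (hb 0 (Nat.zero_le _)) ▸ hy
        · simpa [cons, add_assoc, add_comm 1] using hb (j + 1) (by omega)
    have hdisj : Set.PairwiseDisjoint (S k : Set U)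
        fun y => {ω : ℕ → U | (∀ i < k, ω i ∈ S i) ∧ ∀ j ≤ m + 1, ω (k + j) = cons y j} := by
      intro y _ y' _ hne
      refine Set.disjoint_left.2 fun ω h h' => hne ?_
      simpa [cons] using (h.2 0 (Nat.zero_le _)).symm.trans (h'.2 0 (Nat.zero_le _))
    rw [hsplit, measure_biUnion_finset hdisj fun y _ => by measurability]
    simp only [ih, forwardWeight, Finset.sum_mul, Finset.prod_range_succ']
    refine Finset.sum_congr rfl fun y _ => ?_
    simp only [cons, Nat.rec_zero]
    ring

theorem IsMarkovChain.measure_pathIn (hμ : IsMarkovChain v P μ) (S : ℕ → Finset U) (k : ℕ) :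
    μ {ω | ∀ i ≤ k, ω i ∈ S i} = ∑ y ∈ S k, forwardWeight v P S k y := by
  have hsplit : {ω : ℕ → U | ∀ i ≤ k, ω i ∈ S i}
      = ⋃ y ∈ S k, {ω | (∀ i < k, ω i ∈ S i) ∧ ∀ j ≤ 0, ω (k + j) = y} := by
    ext ω
    simp only [Set.mem_ofPred_eq, Set.mem_iUnion, exists_prop, nonpos_iff_eq_zero, forall_eq,
      add_zero]
    refine ⟨fun h => ⟨ω k, h k le_rfl, fun i hi => h i hi.le, rfl⟩, ?_⟩
    rintro ⟨_, hk, h, rfl⟩ i hi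
    rcases hi.lt_or_eq with hi | rfl
    exacts [h i hi, hk]
  have hdisj : Set.PairwiseDisjoint (S k : Set U)
      fun y => {ω : ℕ → U | (∀ i < k, ω i ∈ S i) ∧ ∀ j ≤ 0, ω (k + j) = y} :=
    fun y _ y' _ hne => Set.disjoint_left.2 fun ω h h' =>
      hne ((h.2 0 le_rfl).symm.trans (h'.2 0 le_rfl))
  rw [hsplit, measure_biUnion_finset hdisj fun y _ => by measurability]
  rw [Finset.sum_congr rfl fun y _ => hμ.measure_pathIn_and_tail_eq S k 0 fun _ => y]
  simp

end MarkovChain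

section Lumping

variable {U C : Type*} {f : U → C} {fib : C → Finset U} {v : U → ℝ≥0∞} {P : U → U → ℝ≥0∞}
  {w : C → ℝ≥0∞} {Q : C → C → ℝ≥0∞} {ν : C → U → ℝ≥0∞}

theorem forwardWeight_fibres_eq (hfib : ∀ z x, x ∈ fib z ↔ f x = z)
    (hνsupp : ∀ z x, f x ≠ z → ν z x = 0)
    (hlump : ∀ z z' x', f x' = z' → ∑ x ∈ fib z, ν z x * P x x' = Q z z' * ν z' x')
    (hv : ∀ x, v x = ∑' z, w z * ν z x) (a : ℕ → C) (k : ℕ) {y : U} (hy : f y = a k) :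
    forwardWeight v P (fun i => fib (a i)) k y
      = w (a 0) * (∏ i ∈ Finset.range k, Q (a i) (a (i + 1))) * ν (a k) y := by
  induction k generalizing y with
  | zero =>
    rw [forwardWeight, hv,
      tsum_eq_single (a 0) fun z hz => by rw [hνsupp z y (by rwa [hy, ne_comm]), mul_zero]]
    simp
  | succ k ih =>
    simp only [forwardWeight]
    rw [Finset.sum_congr rfl fun x hx => by rw [ih ((hfib _ _).1 hx)]]
    simp only [mul_assoc, ← Finset.mul_sum, hlump (a k) (a (k + 1)) y hy, Finset.prod_range_succ]

variable [MeasurableSpace U] [MeasurableSingletonClass U] [MeasurableSpace C]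
  [MeasurableSingletonClass C] {μ : Measure (ℕ → U)}

theorem IsMarkovChain.map_of_exactLumping (hμ : IsMarkovChain v P μ) (hf : Measurable f)
    (hfib : ∀ z x, x ∈ fib z ↔ f x = z) (hQ : IsStochastic Q)
    (hνsupp : ∀ z x, f x ≠ z → ν z x = 0) (hνprob : ∀ z, IsProbVec (ν z))
    (hlump : ∀ z z' x', f x' = z' → ∑ x ∈ fib z, ν z x * P x x' = Q z z' * ν z' x')
    (hw : IsProbVec w) (hv : ∀ x, v x = ∑' z, w z * ν z x) :
    IsMarkovChain w Q (μ.map fun ω n => f (ω n)) := by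
  have hF : Measurable fun (ω : ℕ → U) n => f (ω n) := by fun_prop
  have hνfib : ∀ z, ∑ x ∈ fib z, ν z x = 1 := fun z => by
    rw [← hνprob z, tsum_eq_sum fun x hx => hνsupp z x (mt (hfib z x).2 hx)]
  have := hμ.1
  refine ⟨Measure.isProbabilityMeasure_map hF.aemeasurable, hw, hQ, fun k a => ?_⟩
  have hpre : (fun (ω : ℕ → U) n => f (ω n)) ⁻¹' {ω | ∀ i ≤ k, ω i = a i}
      = {ω | ∀ i ≤ k, ω i ∈ fib (a i)} := by
    ext ω
    simp [hfib]
  rw [Measure.map_apply hF (by measurability), hpre, hμ.measure_pathIn,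
    Finset.sum_congr rfl fun y hy =>
      forwardWeight_fibres_eq hfib hνsupp hlump hv a k ((hfib _ _).1 hy),
    ← Finset.mul_sum, hνfib, mul_one]

end Lumping

theorem ENNReal.div_mul_div_cancel' {a b c : ℝ≥0∞} (ha0 : a ≠ 0) (hat : a ≠ ∞) :
    a / b * (c / a) = c / b := by
  simp only [div_eq_mul_inv]
  rw [show a * b⁻¹ * (c * a⁻¹) = a * a⁻¹ * (c * b⁻¹) by ring,
    ENNReal.mul_inv_cancel ha0 hat, one_mul]

theorem ENNReal.pow_add_pow_ne_zero_of_add_eq_one {p q : ℝ≥0∞} (hpq : p + q = 1) (n : ℕ) :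
    p ^ n + q ^ n ≠ 0 := by
  intro h
  obtain ⟨hp, hq⟩ := add_eq_zero.1 h
  rw [pow_eq_zero_iff'] at hp hq
  simp [hp.1, hq.1] at hpq

theorem ENNReal.pow_add_pow_ne_top_of_add_eq_one {p q : ℝ≥0∞} (hpq : p + q = 1) (n : ℕ) :
    p ^ n + q ^ n ≠ ∞ := by
  obtain ⟨hp, hq⟩ := ENNReal.add_ne_top.1 (hpq ▸ ENNReal.one_ne_top)
  exact ENNReal.add_ne_top.2 ⟨ENNReal.pow_ne_top hp, ENNReal.pow_ne_top hq⟩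

def natAbsFiber (n : ℕ) : Finset ℤ := {(n : ℤ), -(n : ℤ)}

theorem mem_natAbsFiber {n : ℕ} {x : ℤ} : x ∈ natAbsFiber n ↔ x.natAbs = n := by
  simp [natAbsFiber, Int.natAbs_eq_iff]

theorem sum_natAbsFiber_neg {M : Type*} [AddCommMonoid M] (n : ℕ) (g : ℤ → M) :
    ∑ x ∈ natAbsFiber n, g (-x) = ∑ x ∈ natAbsFiber n, g x :=
  Finset.sum_equiv (Equiv.neg ℤ) (by simp [mem_natAbsFiber]) (by simp)

theorem tsum_natAbs_eq_sum_natAbsFiber {M : Type*} [AddCommMonoid M] [TopologicalSpace M]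
    (z : ℕ) (g : ℤ → M) : ∑' x : {x : ℤ // x.natAbs = z}, g x = ∑ x ∈ natAbsFiber z, g x :=
  (Equiv.tsum_eq (Equiv.subtypeEquivRight fun _ => mem_natAbsFiber.symm) fun y => g y.1).trans
    (Finset.tsum_subtype _ _)

section BiasedWalk

variable {p q : ℝ≥0∞}

theorem nufam_eq_zero_of_natAbs_ne {n : ℕ} {k : ℤ} (h : k.natAbs ≠ n) : nufam p q n k = 0 := by
  have h1 : k ≠ n := by omega
  have h2 : k ≠ -n := by omega
  simp [nufam, h1, h2]

theorem nufam_zero (k : ℤ) : nufam p q 0 k = if k = 0 then 1 else 0 := by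
  by_cases h : k = 0 <;> simp [nufam, h, ENNReal.div_self]

theorem nufam_natCast_self {n : ℕ} (hn : n ≠ 0) : nufam p q n n = p ^ n / (p ^ n + q ^ n) := by
  have h : (n : ℤ) ≠ -n := by omega
  simp [nufam, h]

theorem nufam_neg_natCast_self {n : ℕ} (hn : n ≠ 0) :
    nufam p q n (-n) = q ^ n / (p ^ n + q ^ n) := by
  have h : -(n : ℤ) ≠ n := by omega
  simp [nufam, h]

theorem nufam_neg (n : ℕ) (k : ℤ) : nufam p q n (-k) = nufam q p n k := by
  simp only [nufam, neg_eq_iff_eq_neg, neg_neg, add_comm]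

theorem PXrw_of_eq_add_one {x y : ℤ} (h : y = x + 1) : PXrw p q x y = p := by
  simp [PXrw, h]

theorem PXrw_of_eq_sub_one {x y : ℤ} (h : y = x - 1) : PXrw p q x y = q := by
  rw [PXrw, if_neg (by omega), if_pos h]

theorem PXrw_of_ne {x y : ℤ} (h₁ : y ≠ x + 1) (h₂ : y ≠ x - 1) : PXrw p q x y = 0 := by
  simp [PXrw, h₁, h₂]

theorem PXrw_neg_neg (x y : ℤ) : PXrw p q (-x) (-y) = PXrw q p x y := by
  simp only [PXrw]
  split_ifs <;> first | rfl | omega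

theorem PZrw_succ_succ (m : ℕ) :
    PZrw p q (m + 1) (m + 2) = (p ^ (m + 2) + q ^ (m + 2)) / (p ^ (m + 1) + q ^ (m + 1)) := by
  simp [PZrw]

theorem PZrw_succ_self (m : ℕ) :
    PZrw p q (m + 1) m = (p ^ (m + 1) * q + q ^ (m + 1) * p) / (p ^ (m + 1) + q ^ (m + 1)) := by
  rw [PZrw, if_neg (by omega), if_neg (by omega), if_pos (by omega)]

theorem PZrw_succ_of_ne {m w : ℕ} (h₁ : w ≠ m + 2) (h₂ : w ≠ m) : PZrw p q (m + 1) w = 0 := by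
  simp [PZrw, h₁, h₂]

theorem PZrw_swap : PZrw p q = PZrw q p := by
  ext z w
  simp only [PZrw, add_comm, mul_comm]

theorem isProbVec_nufam (hpq : p + q = 1) (n : ℕ) : IsProbVec (nufam p q n) := by
  rw [IsProbVec, tsum_eq_sum fun k hk => nufam_eq_zero_of_natAbs_ne (mt mem_natAbsFiber.2 hk)]
  rcases n with _ | m
  · simp [natAbsFiber, nufam_zero]
  · rw [natAbsFiber, Finset.sum_pair (by omega), nufam_natCast_self (by omega),
      nufam_neg_natCast_self (by omega), ENNReal.div_add_div_same,
      ENNReal.div_self (ENNReal.pow_add_pow_ne_zero_of_add_eq_one hpq _)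
        (ENNReal.pow_add_pow_ne_top_of_add_eq_one hpq _)]

theorem isStochastic_PZrw (hpq : p + q = 1) : IsStochastic (PZrw p q) := by
  rintro (_ | m)
  · simp [PZrw]
  · rw [tsum_eq_sum (s := {m + 2, m}) fun w hw => PZrw_succ_of_ne (by simp_all) (by simp_all),
      Finset.sum_pair (by omega), PZrw_succ_succ, PZrw_succ_self, ENNReal.div_add_div_same,
      show p ^ (m + 2) + q ^ (m + 2) + (p ^ (m + 1) * q + q ^ (m + 1) * p)
        = (p + q) * (p ^ (m + 1) + q ^ (m + 1)) by ring, hpq, one_mul,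
      ENNReal.div_self (ENNReal.pow_add_pow_ne_zero_of_add_eq_one hpq _)
        (ENNReal.pow_add_pow_ne_top_of_add_eq_one hpq _)]

theorem sum_natAbsFiber_nufam_mul_PXrw_natCast (hpq : p + q = 1) (z n : ℕ) :
    ∑ x ∈ natAbsFiber z, nufam p q z x * PXrw p q x n = PZrw p q z n * nufam p q n n := by
  rcases z with _ | m
  · by_cases hn : n = 1
    · subst hn
      rw [nufam_natCast_self one_ne_zero]
      simp [natAbsFiber, nufam_zero, PXrw, PZrw, hpq]
    · simp [natAbsFiber, nufam_zero, PXrw, PZrw, hn]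
  · rw [natAbsFiber, Finset.sum_pair (by omega), nufam_natCast_self (by omega),
      nufam_neg_natCast_self (by omega)]
    obtain rfl | rfl | ⟨h₁, h₂⟩ : n = m + 2 ∨ m = n ∨ (n ≠ m + 2 ∧ n ≠ m) := by omega
    · rw [PXrw_of_eq_add_one (by omega), PXrw_of_ne (by omega) (by omega), PZrw_succ_succ,
        nufam_natCast_self (by omega), mul_zero, add_zero,
        ENNReal.div_mul_div_cancel' (ENNReal.pow_add_pow_ne_zero_of_add_eq_one hpq _)
          (ENNReal.pow_add_pow_ne_top_of_add_eq_one hpq _),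
        ← ENNReal.mul_div_right_comm, ← pow_succ]
    · rw [PXrw_of_eq_sub_one (by omega), PZrw_succ_self]
      rcases eq_or_ne m 0 with rfl | hm
      · rw [PXrw_of_eq_add_one (by omega), nufam_zero]
        simp only [Nat.cast_zero, if_true, div_eq_mul_inv]
        ring
      · rw [PXrw_of_ne (by omega) (by omega), nufam_natCast_self hm, mul_zero, add_zero,
          show p ^ (m + 1) * q + q ^ (m + 1) * p = (p ^ m + q ^ m) * (p * q) by ring,
          ENNReal.mul_div_right_comm, mul_right_comm,
          ENNReal.div_mul_div_cancel' (ENNReal.pow_add_pow_ne_zero_of_add_eq_one hpq _)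
            (ENNReal.pow_add_pow_ne_top_of_add_eq_one hpq _)]
        simp only [div_eq_mul_inv]
        ring
    · rw [PXrw_of_ne (by omega) (by omega), PXrw_of_ne (by omega) (by omega),
        PZrw_succ_of_ne h₁ h₂]
      simp

theorem sum_natAbsFiber_nufam_mul_PXrw (hpq : p + q = 1) (z : ℕ) (x' : ℤ) :
    ∑ x ∈ natAbsFiber z, nufam p q z x * PXrw p q x x'
      = PZrw p q z x'.natAbs * nufam p q x'.natAbs x' := by
  obtain ⟨n, rfl | rfl⟩ := Int.eq_nat_or_neg x'
  · exact sum_natAbsFiber_nufam_mul_PXrw_natCast hpq z n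
  · rw [← sum_natAbsFiber_neg, Int.natAbs_neg, Int.natAbs_natCast, PZrw_swap]
    simp only [PXrw_neg_neg, nufam_neg]
    exact sum_natAbsFiber_nufam_mul_PXrw_natCast (add_comm p q ▸ hpq) z n

end BiasedWalk

theorem statement_19_general
    (p q : ℝ≥0∞) (hp1 : p < 1) (hq : q = 1 - p)
    (μX : Measure (ℕ → ℤ))
    (hX : IsMarkovChain (fun x : ℤ => if x = 0 then 1 else 0) (PXrw p q) μX) :
    IsMarkovChain (fun z : ℕ => if z = 0 then 1 else 0) (PZrw p q)
      (μX.map (fun ω n => (ω n).natAbs)) ∧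
    (∀ (n : ℕ) (k : ℤ), k.natAbs ≠ n → nufam p q n k = 0) ∧
    (∀ n : ℕ, ∑' k : ℤ, nufam p q n k = 1) ∧
    (∀ (z z' : ℕ) (x' : ℤ), x'.natAbs = z' →
      ∑' x : {x : ℤ // x.natAbs = z}, nufam p q z x.1 * PXrw p q x.1 x'
        = PZrw p q z z' * nufam p q z' x') ∧
    (∃ w : ℕ → ℝ≥0∞, ∑' n, w n = 1 ∧
      ∀ k : ℤ, (if k = 0 then (1 : ℝ≥0∞) else 0) = ∑' n, w n * nufam p q n k) := by
  have hpq : p + q = 1 := by rw [hq, add_tsub_cancel_of_le hp1.le]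
  have hlump : ∀ (z z' : ℕ) (x' : ℤ), x'.natAbs = z' →
      ∑ x ∈ natAbsFiber z, nufam p q z x * PXrw p q x x' = PZrw p q z z' * nufam p q z' x' := by
    rintro z _ x' rfl
    exact sum_natAbsFiber_nufam_mul_PXrw hpq z x'
  have hδ : ∀ k : ℤ, (if k = 0 then (1 : ℝ≥0∞) else 0)
      = ∑' n : ℕ, (if n = 0 then 1 else 0) * nufam p q n k := fun k => by
    rw [tsum_eq_single 0 fun n hn => by simp [hn], nufam_zero]
    simp
  have hsupp : ∀ (n : ℕ) (k : ℤ), k.natAbs ≠ n → nufam p q n k = 0 :=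
    fun _ _ => nufam_eq_zero_of_natAbs_ne
  refine ⟨hX.map_of_exactLumping measurable_from_top (fun _ _ => mem_natAbsFiber)
      (isStochastic_PZrw hpq) hsupp (isProbVec_nufam hpq) hlump (tsum_ite_eq 0 1) hδ,
    hsupp, isProbVec_nufam hpq,
    fun z z' x' h => (tsum_natAbs_eq_sum_natAbsFiber z _).trans (hlump z z' x' h),
    _, tsum_ite_eq 0 1, hδ⟩

/-- **Biased random walk and its absolute value.** For `1/2 < p < 1`, `q = 1 - p`, and
`X̄ = MC(δ_0, P_X)` the biased simple random walk on `ℤ`, the absolute-value process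
`(|X̄_t|)_{t ≥ 0}` is a time-homogeneous Markov chain equal in law to `MC(δ_0, P_Z)`;
moreover `X̄` lumps exactly under `|·|` to `MC(δ_0, P_Z)` with respect to `(ν_n)_{n ≥ 0}`:
each `ν_n` is a probability vector supported on the fibre `{k : |k| = n}`, the exact lumping
equation holds, and `δ_0` is a convex combination of the `ν_n`. -/
theorem statement_19
    (p q : ℝ≥0∞) (hp : 1/2 < p) (hp1 : p < 1) (hq : q = 1 - p)
    (μX : Measure (ℕ → ℤ))
    (hX : IsMarkovChain (fun x : ℤ => if x = 0 then 1 else 0) (PXrw p q) μX) :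
    IsMarkovChain (fun z : ℕ => if z = 0 then 1 else 0) (PZrw p q)
      (μX.map (fun ω n => (ω n).natAbs)) ∧
    (∀ (n : ℕ) (k : ℤ), k.natAbs ≠ n → nufam p q n k = 0) ∧
    (∀ n : ℕ, ∑' k : ℤ, nufam p q n k = 1) ∧
    (∀ (z z' : ℕ) (x' : ℤ), x'.natAbs = z' →
      ∑' x : {x : ℤ // x.natAbs = z}, nufam p q z x.1 * PXrw p q x.1 x'
        = PZrw p q z z' * nufam p q z' x') ∧
    (∃ w : ℕ → ℝ≥0∞, ∑' n, w n = 1 ∧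
      ∀ k : ℤ, (if k = 0 then (1 : ℝ≥0∞) else 0) = ∑' n, w n * nufam p q n k) :=
  statement_19_general p q hp1 hq μX hX
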